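/- arXiv:1809.05908 — 2 statements merged into one kernel-verified Lean document; each statement's English description precedes it below -/
import Mathlib

section
/- If two (1,1)-tensor fields A, B commute, then for all smooth functions f, g, h, k on M, H_{fI+gA, hI+kB}(X,Y) = g²k² H_{A,B}(X,Y), where H_{A,B} is the generalized Haantjes binary tensor. -/
open scoped BigOperators

section Setup

variable (R L : Type*) [CommRing R] [Algebra ℝ R] [LieRing L] [Module ℝ L]
  [LieAlgebra ℝ L] [Module R L] [IsScalarTower ℝ R L] [SMulCommClass R ℝ L]

/-- An abstract model of the calculus of vector fields on a smooth manifold `M`: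
`R` plays the role of the smooth functions `C^∞(M)`, `L` the role of the Lie algebra
of vector fields (an `R`-module), `anchor X` is the derivation `f ↦ X(f)` (the Lie
derivative of a function along a vector field), and `leibniz` is the Leibniz rule
for the Lie bracket of vector fields. -/
structure VectorFieldCalculus : Type _ where
  anchor : L → Derivation ℝ R R
  leibniz : ∀ (f : R) (X Y : L), ⁅X, f • Y⁆ = f • ⁅X, Y⁆ + (anchor X f) • Y

end Setup

variable {R L : Type*} [CommRing R] [Algebra ℝ R] [LieRing L] [Module ℝ L]
  [LieAlgebra ℝ L] [Module R L] [IsScalarTower ℝ R L] [SMulCommClass R ℝ L]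

/-- The Nijenhuis torsion of a (1,1)-tensor field `A`. -/
def nijenhuisTorsion (A : L →ₗ[R] L) (X Y : L) : L :=
  A (A ⁅X, Y⁆) + ⁅A X, A Y⁆ - A (⁅X, A Y⁆ + ⁅A X, Y⁆)

/-- The Frölicher–Nijenhuis bracket of two (1,1)-tensor fields `A`, `B`. -/
def fnBracket (A B : L →ₗ[R] L) (X Y : L) : L :=
  (A (B ⁅X, Y⁆) + B (A ⁅X, Y⁆)) + ⁅A X, B Y⁆ + ⁅B X, A Y⁆
    - A (⁅X, B Y⁆ + ⁅B X, Y⁆) - B (⁅X, A Y⁆ + ⁅A X, Y⁆)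

/-- The Haantjes torsion of a (1,1)-tensor field `A`. -/
def haantjesTorsion (A : L →ₗ[R] L) (X Y : L) : L :=
  A (A (nijenhuisTorsion A X Y)) + nijenhuisTorsion A (A X) (A Y)
    - A (nijenhuisTorsion A X (A Y) + nijenhuisTorsion A (A X) Y)

/-- The generalized Haantjes binary tensor of two (1,1)-tensor fields `A`, `B`. -/
def haantjesBinary (A B : L →ₗ[R] L) (X Y : L) : L :=
  (A (B (fnBracket A B X Y)) + B (A (fnBracket A B X Y)))
    + fnBracket A B (A X) (B Y) + fnBracket A B (B X) (A Y)
    - A (fnBracket A B X (B Y) + fnBracket A B (B X) Y)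
    - B (fnBracket A B X (A Y) + fnBracket A B (A X) Y)

/-- The generalized Nijenhuis torsion of level `m` of a (1,1)-tensor field `A`,
with `tau A 0 X Y = ⁅X, Y⁆`. -/
def tau (A : L →ₗ[R] L) : ℕ → L → L → L
  | 0 => fun X Y => ⁅X, Y⁆
  | (m + 1) => fun X Y =>
      A (A (tau A m X Y)) + tau A m (A X) (A Y)
        - A (tau A m X (A Y) + tau A m (A X) Y)

set_option linter.unusedSectionVars false in
lemma lie_smul_left' (C : VectorFieldCalculus R L) (s : R) (U V : L) :
    ⁅s • U, V⁆ = s • ⁅U, V⁆ - (C.anchor V s) • U := by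
  rw [← lie_skew, C.leibniz, ← lie_skew U V]
  module

set_option maxHeartbeats 4000000 in
/-- if `A` and `B` commute, `H_{fI+gA, hI+kB}(X,Y) = g²k² H_{A,B}(X,Y)`. -/
theorem haantjesBinary_affine (C : VectorFieldCalculus R L)
    (A B : L →ₗ[R] L) (hcomm : A ∘ₗ B = B ∘ₗ A) (f g h k : R) (X Y : L) :
    haantjesBinary (f • (LinearMap.id : L →ₗ[R] L) + g • A)
        (h • (LinearMap.id : L →ₗ[R] L) + k • B) X Y
      = (g ^ 2 * k ^ 2) • haantjesBinary A B X Y := by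
  have hAB : ∀ x : L, B (A x) = A (B x) := fun x =>
    (LinearMap.congr_fun hcomm x).symm
  simp only [haantjesBinary, fnBracket, LinearMap.add_apply, LinearMap.smul_apply,
    LinearMap.id_coe, id_eq, map_add, map_sub, map_smul, smul_add, smul_sub,
    smul_smul, lie_add, add_lie, lie_sub, sub_lie, hAB]
  simp only [C.leibniz, smul_add, smul_sub, smul_smul, map_add, map_smul, hAB]
  simp only [lie_smul_left' C, smul_add, smul_sub, smul_smul, map_add, map_sub, map_smul, hAB]
  simp only [Derivation.leibniz, smul_eq_mul, smul_add, smul_sub, smul_smul]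
  module
end

section
/- If two (1,1)-tensor fields A and B take simultaneously diagonal form in a local coordinate chart (i.e., A = Σᵢ aᵢ(x) ∂/∂xⁱ ⊗ dxⁱ and B = Σᵢ bᵢ(x) ∂/∂xⁱ ⊗ dxⁱ), then their generalized Haantjes binary tensor H_{A,B}(X,Y) vanishes identically. -/
set_option linter.unusedSectionVars false


open scoped BigOperators

variable {R L : Type*} [CommRing R] [Algebra ℝ R] [LieRing L] [Module ℝ L]
  [LieAlgebra ℝ L] [Module R L] [IsScalarTower ℝ R L] [SMulCommClass R ℝ L]

section Aux


private lemma lb_smul_left' (C : VectorFieldCalculus R L) (f : R) (X Y : L) :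
    ⁅f • X, Y⁆ = f • ⁅X, Y⁆ - (C.anchor Y f) • X := by
  have h := C.leibniz f Y X
  have h2 : ⁅f • X, Y⁆ = -⁅Y, f • X⁆ := (lie_skew _ _).symm
  rw [h2, h, ← lie_skew X Y]
  module

private lemma fn_skew' (A B : L →ₗ[R] L) (X Y : L) :
    fnBracket A B X Y = - fnBracket A B Y X := by
  unfold fnBracket
  rw [← lie_skew X Y, ← lie_skew (A X) (B Y), ← lie_skew (B X) (A Y),
    ← lie_skew X (B Y), ← lie_skew (B X) Y, ← lie_skew X (A Y), ← lie_skew (A X) Y]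
  simp only [map_neg, map_add]
  abel

private lemma fn_add_left' (A B : L →ₗ[R] L) (X₁ X₂ Y : L) :
    fnBracket A B (X₁ + X₂) Y = fnBracket A B X₁ Y + fnBracket A B X₂ Y := by
  unfold fnBracket
  simp only [add_lie, lie_add, map_add]
  abel

private lemma fn_smul_left' (C : VectorFieldCalculus R L) (A B : L →ₗ[R] L) (f : R) (X Y : L) :
    fnBracket A B (f • X) Y = f • fnBracket A B X Y := by
  unfold fnBracket
  rw [lb_smul_left' C f X Y, map_smul, map_smul,
    lb_smul_left' C f (A X) (B Y), lb_smul_left' C f (B X) (A Y),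
    lb_smul_left' C f X (B Y), lb_smul_left' C f (B X) Y,
    lb_smul_left' C f X (A Y), lb_smul_left' C f (A X) Y]
  simp only [map_smul, map_add, map_sub, smul_add, smul_sub]
  module

private lemma fn_add_right' (A B : L →ₗ[R] L) (X Y₁ Y₂ : L) :
    fnBracket A B X (Y₁ + Y₂) = fnBracket A B X Y₁ + fnBracket A B X Y₂ := by
  rw [fn_skew', fn_add_left', fn_skew' A B Y₁, fn_skew' A B Y₂]; abel

private lemma fn_smul_right' (C : VectorFieldCalculus R L) (A B : L →ₗ[R] L) (f : R) (X Y : L) :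
    fnBracket A B X (f • Y) = f • fnBracket A B X Y := by
  rw [fn_skew', fn_smul_left' C, fn_skew' A B Y X]; module

private lemma hb_add_left' (A B : L →ₗ[R] L) (X₁ X₂ Y : L) :
    haantjesBinary A B (X₁ + X₂) Y = haantjesBinary A B X₁ Y + haantjesBinary A B X₂ Y := by
  unfold haantjesBinary
  simp only [map_add, fn_add_left', fn_add_right']
  abel

private lemma hb_smul_left' (C : VectorFieldCalculus R L) (A B : L →ₗ[R] L) (f : R) (X Y : L) :
    haantjesBinary A B (f • X) Y = f • haantjesBinary A B X Y := by
  unfold haantjesBinary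
  simp only [map_add, map_smul, fn_smul_left' C, fn_smul_right' C, smul_add]
  module

private lemma hb_add_right' (A B : L →ₗ[R] L) (X Y₁ Y₂ : L) :
    haantjesBinary A B X (Y₁ + Y₂) = haantjesBinary A B X Y₁ + haantjesBinary A B X Y₂ := by
  unfold haantjesBinary
  simp only [map_add, fn_add_left', fn_add_right']
  abel

private lemma hb_smul_right' (C : VectorFieldCalculus R L) (A B : L →ₗ[R] L) (f : R) (X Y : L) :
    haantjesBinary A B X (f • Y) = f • haantjesBinary A B X Y := by
  unfold haantjesBinary
  simp only [map_add, map_smul, fn_smul_left' C, fn_smul_right' C, smul_add]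
  module

private lemma fn_basis' (C : VectorFieldCalculus R L) {n : ℕ} (e : Module.Basis (Fin n) R L)
    (hframe : ∀ i j : Fin n, ⁅e i, e j⁆ = 0)
    (A B : L →ₗ[R] L) (a b : Fin n → R)
    (hA : ∀ i : Fin n, A (e i) = a i • e i)
    (hB : ∀ i : Fin n, B (e i) = b i • e i) (i j : Fin n) :
    ∃ p q : R, fnBracket A B (e i) (e j) = p • e i + q • e j := by
  refine ⟨(a i - a j) * C.anchor (e j) (b i) + (b i - b j) * C.anchor (e j) (a i),
    C.anchor (a i • e i) (b j) + C.anchor (b i • e i) (a j)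
      - a j * C.anchor (e i) (b j) - b j * C.anchor (e i) (a j), ?_⟩
  unfold fnBracket
  rw [hframe i j, hA i, hB j, hB i, hA j,
    C.leibniz (b j) (a i • e i) (e j), C.leibniz (a j) (b i • e i) (e j),
    C.leibniz (b j) (e i) (e j), C.leibniz (a j) (e i) (e j),
    lb_smul_left' C (a i) (e i) (e j), lb_smul_left' C (b i) (e i) (e j),
    hframe i j]
  simp only [map_add, map_smul, map_sub, map_neg, map_zero, hA, hB, smul_zero, zero_add,
    smul_sub, smul_add, sub_zero, zero_sub]
  module

private lemma hb_basis' (C : VectorFieldCalculus R L) {n : ℕ} (e : Module.Basis (Fin n) R L)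
    (hframe : ∀ i j : Fin n, ⁅e i, e j⁆ = 0)
    (A B : L →ₗ[R] L) (a b : Fin n → R)
    (hA : ∀ i : Fin n, A (e i) = a i • e i)
    (hB : ∀ i : Fin n, B (e i) = b i • e i) (i j : Fin n) :
    haantjesBinary A B (e i) (e j) = 0 := by
  obtain ⟨p, q, hpq⟩ := fn_basis' C e hframe A B a b hA hB i j
  unfold haantjesBinary
  rw [hA i, hB j, hB i, hA j]
  simp only [fn_smul_left' C, fn_smul_right' C, hpq]
  simp only [map_add, map_smul, hA, hB, smul_add]
  module

end Aux

/-- if `A` and `B` are simultaneously diagonal in a natural (commuting) frame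
coming from a coordinate chart, their generalized Haantjes binary tensor vanishes. -/
theorem haantjesBinary_eq_zero_of_simultaneously_diagonal (C : VectorFieldCalculus R L)
    {n : ℕ} (e : Module.Basis (Fin n) R L)
    (hframe : ∀ i j : Fin n, ⁅e i, e j⁆ = 0)
    (A B : L →ₗ[R] L) (a b : Fin n → R)
    (hA : ∀ i : Fin n, A (e i) = a i • e i)
    (hB : ∀ i : Fin n, B (e i) = b i • e i)
    (X Y : L) :
    haantjesBinary A B X Y = 0 := by
  let Hmap : L →ₗ[R] L →ₗ[R] L :=
    LinearMap.mk₂ R (haantjesBinary A B) (hb_add_left' A B) (hb_smul_left' C A B)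
      (hb_add_right' A B) (hb_smul_right' C A B)
  have hz : Hmap = 0 :=
    LinearMap.ext_basis e e fun i j => by
      simpa [Hmap, LinearMap.mk₂_apply] using hb_basis' C e hframe A B a b hA hB i j
  have : haantjesBinary A B X Y = Hmap X Y := rfl
  rw [this, hz]
  rfl
end
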